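/- Fix ε > 0 and let I = {(2,ε), (2,−ε), (−2,ε), (−2,−ε), (1,0), (−1,0)} ⊆ ℝ². Then the yolk radius of I is at least 1, and the LP yolk radius of I is at most ε/√(1+ε²); in particular, the closed ball centered at the origin with radius ε/√(1+ε²) intersects every limiting median hyperplane of I. -/

import Mathlib

/-!
The vertical lines `x = 1` and `x = -1` are both median lines, so a ball meeting every median
line has radius at least `1`. On the other hand the configuration is centrally symmetric, and
pairing each point with its negative shows that a median line `⟪a, ·⟫ = b` of a centrally
symmetric set satisfies `|b| ≤ |⟪a, x⟫|` for every point `x`; taking `x = (1, 0)` gives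
`|b| ≤ |a₀|`. A limiting median line contains two of the points, and checking the pairs shows
that it is almost horizontal: `|a₀| ≤ ε |a₁|`. Together with `a₀² + a₁² = 1` this yields
`|b| ≤ |a₀| ≤ ε / √(1 + ε²)`.
-/

open scoped RealInnerProductSpace
open Real

noncomputable section

/-- Points of Euclidean space `ℝ^k`. -/
abbrev Pt (k : ℕ) := EuclideanSpace ℝ (Fin k)

/-- `(a, b)` (with `‖a‖ = 1`) is a median hyperplane for the finite set of ideal points `I`:
at least `|I|/2` points are on each closed side. -/
def IsMedianHyperplane {k : ℕ} (I : Finset (Pt k)) (a : Pt k) (b : ℝ) : Prop :=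
  ‖a‖ = 1 ∧
    (I.card : ℝ) / 2 ≤ ((I.filter fun x => ⟪a, x⟫ ≤ b).card : ℝ) ∧
    (I.card : ℝ) / 2 ≤ ((I.filter fun x => b ≤ ⟪a, x⟫).card : ℝ)

/-- A limiting median hyperplane for `I ⊆ ℝ^k` is a median hyperplane containing at least
`k` points of `I`. -/
def IsLimitingMedianHyperplane {k : ℕ} (I : Finset (Pt k)) (a : Pt k) (b : ℝ) : Prop :=
  IsMedianHyperplane I a b ∧ k ≤ (I.filter fun x => ⟪a, x⟫ = b).card

/-- The yolk radius: infimum of `r ≥ 0` such that some closed ball `B(c,r)` intersects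
every median hyperplane of `I` (the ball `B(c,r)` meets `H(a,b)` iff `|⟪a,c⟫ - b| ≤ r`). -/
def yolkRadius {k : ℕ} (I : Finset (Pt k)) : ℝ :=
  sInf {r : ℝ | 0 ≤ r ∧ ∃ c : Pt k, ∀ a b, IsMedianHyperplane I a b → |⟪a, c⟫ - b| ≤ r}

/-- The LP yolk radius: infimum of `r ≥ 0` such that some closed ball `B(c,r)` intersects
every limiting median hyperplane of `I`. -/
def lpYolkRadius {k : ℕ} (I : Finset (Pt k)) : ℝ :=
  sInf {r : ℝ | 0 ≤ r ∧ ∃ c : Pt k, ∀ a b, IsLimitingMedianHyperplane I a b → |⟪a, c⟫ - b| ≤ r}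

/-- `B(c,r)` is a yolk of `I`: it intersects every median hyperplane, and every closed ball
intersecting every median hyperplane has radius at least `r`. -/
def IsYolk {k : ℕ} (I : Finset (Pt k)) (c : Pt k) (r : ℝ) : Prop :=
  (∀ a b, IsMedianHyperplane I a b → |⟪a, c⟫ - b| ≤ r) ∧
  ∀ (c' : Pt k) (r' : ℝ),
    (∀ a b, IsMedianHyperplane I a b → |⟪a, c'⟫ - b| ≤ r') → r ≤ r'

/-- `B(c,r)` is an LP yolk of `I`: it intersects every limiting median hyperplane, and every
closed ball intersecting every limiting median hyperplane has radius at least `r`. -/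
def IsLPYolk {k : ℕ} (I : Finset (Pt k)) (c : Pt k) (r : ℝ) : Prop :=
  (∀ a b, IsLimitingMedianHyperplane I a b → |⟪a, c⟫ - b| ≤ r) ∧
  ∀ (c' : Pt k) (r' : ℝ),
    (∀ a b, IsLimitingMedianHyperplane I a b → |⟪a, c'⟫ - b| ≤ r') → r ≤ r'

section CentrallySymmetric

variable {k : ℕ} {I : Finset (Pt k)} {a : Pt k} {b : ℝ}

theorem IsMedianHyperplane.neg (h : IsMedianHyperplane I a b) :
    IsMedianHyperplane I (-a) (-b) := by
  obtain ⟨hnorm, hle, hge⟩ := h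
  refine ⟨by rwa [norm_neg], ?_, ?_⟩ <;> simpa only [inner_neg_left, neg_le_neg_iff]

/-- Negation maps the side `b ≤ ⟪a, ·⟫` into the disjoint side `⟪a, ·⟫ ≤ -b`, and `x` lies on
neither. -/
theorem card_filter_le_inner_lt_half (hI : ∀ x ∈ I, -x ∈ I) {x : Pt k} (hx : x ∈ I)
    (hxb : |⟪a, x⟫| < b) : ((I.filter fun z => b ≤ ⟪a, z⟫).card : ℝ) < I.card / 2 := by
  set U := I.filter fun z => b ≤ ⟪a, z⟫
  have hxb' := abs_lt.mp hxb
  have hdisj : Disjoint U (U.map (Equiv.neg (Pt k)).toEmbedding) := by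
    simp only [Finset.disjoint_left, Finset.mem_map_equiv, Equiv.neg_symm, Equiv.neg_apply,
      U, Finset.mem_filter, inner_neg_right]
    intro z ⟨_, hz⟩ ⟨_, hz'⟩
    linarith
  have hsub : U ∪ U.map (Equiv.neg (Pt k)).toEmbedding ⊂ I := by
    refine Finset.ssubset_iff_of_subset ?_ |>.mpr ⟨x, hx, ?_⟩
    · refine Finset.union_subset (Finset.filter_subset _ _) fun z hz => ?_
      simpa using hI _ (Finset.mem_filter.mp (Finset.mem_map_equiv.mp hz)).1
    · simp only [Finset.mem_union, Finset.mem_map_equiv, Equiv.neg_symm, Equiv.neg_apply, U,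
        Finset.mem_filter, inner_neg_right, not_or, not_and, not_le]
      exact ⟨fun _ => hxb'.2, fun _ => by linarith⟩
  have := Finset.card_lt_card hsub
  rw [Finset.card_union_of_disjoint hdisj, Finset.card_map] at this
  rw [lt_div_iff₀ two_pos]
  exact_mod_cast (by omega : U.card * 2 < I.card)

theorem IsMedianHyperplane.abs_le_abs_inner (hI : ∀ x ∈ I, -x ∈ I)
    (h : IsMedianHyperplane I a b) {x : Pt k} (hx : x ∈ I) : |b| ≤ |⟪a, x⟫| := by
  by_contra! hlt
  rcases le_or_gt 0 b with hb | hb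
  · exact (card_filter_le_inner_lt_half hI hx (hlt.trans_eq (abs_of_nonneg hb))).not_ge
      h.2.2
  · refine (card_filter_le_inner_lt_half hI hx ?_).not_ge h.neg.2.2
    rwa [inner_neg_left, abs_neg, ← abs_of_neg hb]

theorem le_yolkRadius (hI : ∀ x ∈ I, -x ∈ I) {x : Pt k} (hx : x ∈ I) {b₁ b₂ : ℝ}
    (h₁ : IsMedianHyperplane I a b₁) (h₂ : IsMedianHyperplane I a b₂) :
    |b₁ - b₂| / 2 ≤ yolkRadius I := by
  refine le_csInf ⟨‖x‖, norm_nonneg x, 0, fun a' b' h => ?_⟩ fun r ⟨_, c, hc⟩ => ?_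
  · calc |⟪a', (0 : Pt k)⟫ - b'| = |b'| := by simp
      _ ≤ |⟪a', x⟫| := h.abs_le_abs_inner hI hx
      _ ≤ ‖a'‖ * ‖x‖ := abs_real_inner_le_norm a' x
      _ = ‖x‖ := by rw [h.1, one_mul]
  · linarith [abs_sub_le b₁ ⟪a, c⟫ b₂, abs_sub_comm b₁ ⟪a, c⟫, hc a b₁ h₁, hc a b₂ h₂]

end CentrallySymmetric

theorem lpYolkRadius_le {k : ℕ} {I : Finset (Pt k)} {r : ℝ} (hr : 0 ≤ r) (c : Pt k)
    (h : ∀ a b, IsLimitingMedianHyperplane I a b → |⟪a, c⟫ - b| ≤ r) : lpYolkRadius I ≤ r :=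
  csInf_le ⟨0, fun _ hr' => hr'.1⟩ ⟨hr, c, h⟩

theorem inner_vec2 (a : Pt 2) (u v : ℝ) : ⟪a, !₂[u, v]⟫ = a 0 * u + a 1 * v := by
  simp [PiLp.inner_apply, Fin.sum_univ_two, RCLike.inner_apply, mul_comm]

theorem sq_add_sq_of_norm_eq_one {a : Pt 2} (h : ‖a‖ = 1) : a 0 ^ 2 + a 1 ^ 2 = 1 := by
  simpa [h, Fin.sum_univ_two] using (EuclideanSpace.real_norm_sq_eq a).symm

theorem abs_le_div_sqrt_of_sq_le {ε p q b : ℝ} (hε : 0 ≤ ε) (hpq : p ^ 2 + q ^ 2 = 1)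
    (hb : b ^ 2 ≤ p ^ 2) (hp : p ^ 2 ≤ (q * ε) ^ 2) : |b| ≤ ε / √(1 + ε ^ 2) := by
  rw [le_div_iff₀ (by positivity), ← Real.sqrt_sq_eq_abs, ← Real.sqrt_mul (sq_nonneg b)]
  calc √(b ^ 2 * (1 + ε ^ 2)) ≤ √(ε ^ 2) := Real.sqrt_le_sqrt (by nlinarith)
    _ = ε := Real.sqrt_sq hε

def sixPoints (ε : ℝ) : Finset (Pt 2) :=
  {!₂[2, ε], !₂[2, -ε], !₂[-2, ε], !₂[-2, -ε], !₂[1, 0], !₂[-1, 0]}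

theorem neg_mem_sixPoints {ε : ℝ} : ∀ x ∈ sixPoints ε, -x ∈ sixPoints ε := by
  simp only [sixPoints, Finset.mem_insert, Finset.mem_singleton]
  rintro x (rfl | rfl | rfl | rfl | rfl | rfl) <;> simp [← WithLp.toLp_neg]

theorem isMedianHyperplane_sixPoints_vertical {ε b : ℝ} (hε : ε ≠ 0) (hb : |b| ≤ 1) :
    IsMedianHyperplane (sixPoints ε) !₂[1, 0] b := by
  obtain ⟨hb₁, hb₂⟩ := abs_le.mp hb
  have hε' : ε ≠ -ε := fun h => hε (by linarith)
  have hnorm : ‖(!₂[1, 0] : Pt 2)‖ = 1 := by simp [EuclideanSpace.norm_eq]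
  have hhalf : ((sixPoints ε).card : ℝ) / 2 ≤ 3 := by
    have : (sixPoints ε).card ≤ 6 := Finset.card_le_six
    have : ((sixPoints ε).card : ℝ) ≤ 6 := by exact_mod_cast this
    linarith
  refine ⟨hnorm, hhalf.trans ?_, hhalf.trans ?_⟩ <;> norm_cast <;> apply Finset.two_lt_card.mpr
  · refine ⟨!₂[-2, ε], ?_, !₂[-2, -ε], ?_, !₂[-1, 0], ?_, ?_, ?_, ?_⟩ <;>
      simp [hε', sixPoints, inner_vec2] <;> linarith
  · refine ⟨!₂[2, ε], ?_, !₂[2, -ε], ?_, !₂[1, 0], ?_, ?_, ?_, ?_⟩ <;>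
      simp [hε', sixPoints, inner_vec2, hnorm] <;> linarith

theorem IsMedianHyperplane.sq_le_sq_sixPoints {ε b : ℝ} {a : Pt 2}
    (h : IsMedianHyperplane (sixPoints ε) a b) : b ^ 2 ≤ a 0 ^ 2 := by
  have := h.abs_le_abs_inner neg_mem_sixPoints (x := !₂[1, 0]) (by simp [sixPoints])
  rw [inner_vec2, mul_one, mul_zero, add_zero] at this
  exact sq_le_sq.mpr this

/-- Two distinct points of `sixPoints ε` on the line give a relation `α a₀ = β a₁ ε` with
`|β| ≤ |α|`, except for the lines `x = ±2`, which `b² ≤ a₀²` rules out. -/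
theorem IsLimitingMedianHyperplane.sq_le_sq_sixPoints {ε b : ℝ} {a : Pt 2}
    (h : IsLimitingMedianHyperplane (sixPoints ε) a b) : a 0 ^ 2 ≤ (a 1 * ε) ^ 2 := by
  have hb := h.1.sq_le_sq_sixPoints
  obtain ⟨x, hx, y, hy, hxy⟩ := Finset.one_lt_card.mp h.2
  simp only [sixPoints, Finset.mem_filter, Finset.mem_insert, Finset.mem_singleton] at hx hy
  obtain ⟨hx, rfl⟩ := hx
  obtain ⟨hy, hxy'⟩ := hy
  rcases hx with rfl | rfl | rfl | rfl | rfl | rfl <;>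
    rcases hy with rfl | rfl | rfl | rfl | rfl | rfl <;>
    first
    | exact absurd rfl hxy
    | simp only [inner_vec2] at hb hxy'
      nlinarith [congrArg (· * a 0) hxy', congrArg (· * (a 1 * ε)) hxy', sq_nonneg (a 0)]

theorem IsLimitingMedianHyperplane.abs_le_sixPoints {ε b : ℝ} (hε : 0 ≤ ε) {a : Pt 2}
    (h : IsLimitingMedianHyperplane (sixPoints ε) a b) : |b| ≤ ε / √(1 + ε ^ 2) :=
  abs_le_div_sqrt_of_sq_le hε (sq_add_sq_of_norm_eq_one h.1.1) h.1.sq_le_sq_sixPoints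
    h.sq_le_sq_sixPoints

open scoped Classical in
/-- For the six ideal points `(±2, ±ε), (±1, 0)` in `ℝ²`, the yolk radius is
at least `1`, the LP yolk radius is at most `ε/√(1+ε²)`, and in particular the closed ball
centered at the origin with radius `ε/√(1+ε²)` intersects every limiting median
hyperplane. -/
theorem six_point_example (ε : ℝ) (hε : 0 < ε) :
    ∀ I : Finset (Pt 2),
      I = ({!₂[2, ε], !₂[2, -ε], !₂[-2, ε], !₂[-2, -ε], !₂[1, 0], !₂[-1, 0]} : Finset (Pt 2)) →
      1 ≤ yolkRadius I ∧
      lpYolkRadius I ≤ ε / Real.sqrt (1 + ε ^ 2) ∧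
      ∀ a b, IsLimitingMedianHyperplane I a b →
        |⟪a, (0 : Pt 2)⟫ - b| ≤ ε / Real.sqrt (1 + ε ^ 2) := by
  rintro I rfl
  have hlimiting : ∀ a b, IsLimitingMedianHyperplane (sixPoints ε) a b →
      |⟪a, (0 : Pt 2)⟫ - b| ≤ ε / √(1 + ε ^ 2) := fun a b h => by
    simpa using h.abs_le_sixPoints hε.le
  refine ⟨?_, lpYolkRadius_le (by positivity) 0 hlimiting, hlimiting⟩
  calc (1 : ℝ) = |1 - -1| / 2 := by norm_num
    _ ≤ yolkRadius (sixPoints ε) :=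
      le_yolkRadius neg_mem_sixPoints (x := !₂[1, 0]) (by simp [sixPoints])
        (isMedianHyperplane_sixPoints_vertical hε.ne' (by norm_num))
        (isMedianHyperplane_sixPoints_vertical hε.ne' (by norm_num))
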